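/- arXiv:2401.00253 — 2 statements merged into one kernel-verified Lean document; each statement's English description precedes it below -/
import Mathlib

section
/- Let G be a non-complete bipartite graph with parts X and Y. If A, B ∈ F(X), A ∩ B ≠ ∅, and N(A ∪ B) ≠ Y, then both A ∩ B and A ∪ B are in F(X). -/
/-!
The largest independent set with trace `S` on `X` is `S ∪ (Y \ N(S))`; `ι(S) = indepSize E S` is its size.
Since `Y \ N(A ∪ B) = (Y \ N(A)) ∩ (Y \ N(B))` and `Y \ N(A ∩ B) ⊇ (Y \ N(A)) ∪ (Y \ N(B))`,
the function `ι` is supermodular: `ι(A ∩ B) + ι(A ∪ B) ≥ ι(A) + ι(B) = 2m`, where `m` is the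
maximum size of a nontrivial independent set. The hypotheses make both `A ∩ B` and `A ∪ B` traces
of nontrivial independent sets, so `ι(A ∩ B), ι(A ∪ B) ≤ m`, and hence both equal `m`.
-/

/-- Neighborhood (in `Y`) of a set `A ⊆ X` in the bipartite graph with
adjacency relation `E : X → Y → Prop`. -/
def nbrX {X Y : Type*} (E : X → Y → Prop) (A : Set X) : Set Y :=
  {y | ∃ a ∈ A, E a y}

/-- `(A, B)` is a nontrivial independent set of the bipartite graph `E`:
both parts are non-empty and there are no edges between them. -/
def NontrivIndep {X Y : Type*} (E : X → Y → Prop) (A : Set X) (B : Set Y) : Prop :=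
  A.Nonempty ∧ B.Nonempty ∧ ∀ a ∈ A, ∀ b ∈ B, ¬ E a b

/-- `A` is the trace on `X` of a maximum-sized nontrivial independent set. -/
def FragX {X Y : Type*} (E : X → Y → Prop) (A : Set X) : Prop :=
  ∃ B : Set Y, NontrivIndep E A B ∧
    ∀ (A' : Set X) (B' : Set Y), NontrivIndep E A' B' →
      A'.ncard + B'.ncard ≤ A.ncard + B.ncard

section

variable {X Y : Type*} (E : X → Y → Prop)

lemma nbrX_mono {S T : Set X} (h : S ⊆ T) : nbrX E S ⊆ nbrX E T :=
  fun _ ⟨a, ha, hab⟩ => ⟨a, h ha, hab⟩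

lemma nbrX_union (S T : Set X) : nbrX E (S ∪ T) = nbrX E S ∪ nbrX E T := by
  ext y
  simp [nbrX, or_and_right, exists_or]

lemma compl_nbrX_union_subset_compl_nbrX_inter (S T : Set X) :
    (nbrX E S)ᶜ ∪ (nbrX E T)ᶜ ⊆ (nbrX E (S ∩ T))ᶜ :=
  Set.union_subset (Set.compl_subset_compl.mpr (nbrX_mono E Set.inter_subset_left))
    (Set.compl_subset_compl.mpr (nbrX_mono E Set.inter_subset_right))

lemma nontrivIndep_compl_nbrX {S : Set X} (hS : S.Nonempty) (hN : (nbrX E S)ᶜ.Nonempty) :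
    NontrivIndep E S (nbrX E S)ᶜ :=
  ⟨hS, hN, fun a ha _ hb hab => hb ⟨a, ha, hab⟩⟩

lemma NontrivIndep.subset_compl_nbrX {S : Set X} {T : Set Y} (h : NontrivIndep E S T) :
    T ⊆ (nbrX E S)ᶜ :=
  fun b hb ⟨a, ha, hab⟩ => h.2.2 a ha b hb hab

noncomputable def indepSize (S : Set X) : ℕ :=
  S.ncard + (nbrX E S)ᶜ.ncard

lemma indepSize_add_indepSize_le [Finite X] [Finite Y] (S T : Set X) :
    indepSize E S + indepSize E T ≤ indepSize E (S ∩ T) + indepSize E (S ∪ T) := by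
  have hX := Set.ncard_inter_add_ncard_union S T
  have hY := Set.ncard_union_add_ncard_inter (nbrX E S)ᶜ (nbrX E T)ᶜ
  have hle := Set.ncard_le_ncard (compl_nbrX_union_subset_compl_nbrX_inter E S T)
  unfold indepSize
  rw [nbrX_union, Set.compl_union]
  omega

namespace FragX

variable {E} {S : Set X}

lemma nontrivIndep_compl_nbrX (hS : FragX E S) : NontrivIndep E S (nbrX E S)ᶜ := by
  obtain ⟨T, hT, -⟩ := hS
  exact _root_.nontrivIndep_compl_nbrX E hT.1 (hT.2.1.mono hT.subset_compl_nbrX)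

lemma le_indepSize [Finite Y] (hS : FragX E S) {A : Set X} {B : Set Y}
    (h : NontrivIndep E A B) : A.ncard + B.ncard ≤ indepSize E S := by
  obtain ⟨T, hT, hmax⟩ := hS
  exact (hmax A B h).trans (Nat.add_le_add_left (Set.ncard_le_ncard hT.subset_compl_nbrX) _)

lemma indepSize_eq [Finite Y] {T : Set X} (hS : FragX E S) (hT : FragX E T) :
    indepSize E S = indepSize E T :=
  le_antisymm (hT.le_indepSize hS.nontrivIndep_compl_nbrX)
    (hS.le_indepSize hT.nontrivIndep_compl_nbrX)

lemma of_indepSize_le [Finite Y] (hS : FragX E S) {T : Set X}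
    (hT : NontrivIndep E T (nbrX E T)ᶜ) (hle : indepSize E S ≤ indepSize E T) :
    FragX E T :=
  ⟨_, hT, fun _ _ h => (hS.le_indepSize h).trans hle⟩

end FragX

end

theorem stmt5_general {X Y : Type*} [Fintype X] [Fintype Y] (E : X → Y → Prop)
    (A B : Set X)
    (hA : FragX E A) (hB : FragX E B)
    (hAB : (A ∩ B).Nonempty) (hN : nbrX E (A ∪ B) ≠ Set.univ) :
    FragX E (A ∩ B) ∧ FragX E (A ∪ B) := by
  have hInter : NontrivIndep E (A ∩ B) (nbrX E (A ∩ B))ᶜ :=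
    nontrivIndep_compl_nbrX E hAB <| hA.nontrivIndep_compl_nbrX.2.1.mono <|
      Set.subset_union_left.trans (compl_nbrX_union_subset_compl_nbrX_inter E A B)
  have hUnion : NontrivIndep E (A ∪ B) (nbrX E (A ∪ B))ᶜ :=
    nontrivIndep_compl_nbrX E (hAB.mono (Set.inter_subset_left.trans Set.subset_union_left))
      (Set.nonempty_compl.mpr hN)
  have hInter_le : indepSize E (A ∩ B) ≤ indepSize E A := hA.le_indepSize hInter
  have hUnion_le : indepSize E (A ∪ B) ≤ indepSize E A := hA.le_indepSize hUnion
  have hsuper := indepSize_add_indepSize_le E A B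
  have hsize_eq := hA.indepSize_eq hB
  exact ⟨hA.of_indepSize_le hInter (by omega), hA.of_indepSize_le hUnion (by omega)⟩

theorem stmt5 {X Y : Type*} [Fintype X] [Fintype Y] (E : X → Y → Prop)
    (hnc : ∃ x y, ¬ E x y) (A B : Set X)
    (hA : FragX E A) (hB : FragX E B)
    (hAB : (A ∩ B).Nonempty) (hN : nbrX E (A ∪ B) ≠ Set.univ) :
    FragX E (A ∩ B) ∧ FragX E (A ∪ B) :=
  stmt5_general E A B hA hB hAB hN
end

section
/- Let G be a non-complete bipartite graph with parts X and Y, and Γ an automorphism group of G stabilizing X. Suppose A ∈ F(X), γ ∈ Γ satisfies γ(A) ∩ A ≠ ∅, and |A| ≤ |Y \ N(A)|. Then both A ∪ γ(A) and A ∩ γ(A) lie in F(X). -/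
/-!
Let `(A, B)` be a maximum nontrivial independent pair and `(S, T) = (σ A, τ B)` its image, also
maximum. The pairs `(A ∪ S, B ∩ T)` and `(A ∩ S, B ∪ T)` are independent, and by inclusion–exclusion
their sizes add up to twice the maximum, so both are maximum as soon as they are nontrivial.
`A ∩ S ≠ ∅` is assumed. As `(A, Y \ N(A))` is independent, `|T| = |B| ≥ |Y \ N(A)| ≥ |A|`, so
`B ∩ T = ∅` would make `(A ∩ S, B ∪ T)` larger than the maximum.
-/

open Set Function

-- `FragX E A` unfolds to `∃ B, IsMaxIndep E A B`.
def IsMaxIndep {X Y : Type*} (E : X → Y → Prop) (A : Set X) (B : Set Y) : Prop :=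
  NontrivIndep E A B ∧
    ∀ (A' : Set X) (B' : Set Y), NontrivIndep E A' B' → A'.ncard + B'.ncard ≤ A.ncard + B.ncard

section

variable {X Y : Type*} {E : X → Y → Prop} {A S : Set X} {B T : Set Y}

lemma NontrivIndep.subset_compl_nbrX_s6 (h : NontrivIndep E A B) : B ⊆ (nbrX E A)ᶜ := by
  rintro y hy ⟨a, ha, hay⟩
  exact h.2.2 a ha y hy hay

lemma NontrivIndep.compl_nbrX (h : NontrivIndep E A B) : NontrivIndep E A (nbrX E A)ᶜ :=
  ⟨h.1, h.2.1.mono h.subset_compl_nbrX_s6, fun a ha _ hb hab => hb ⟨a, ha, hab⟩⟩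

lemma NontrivIndep.image {X' Y' : Type*} {E' : X' → Y' → Prop} {f : X → X'} {g : Y → Y'}
    (hfg : ∀ x y, E' (f x) (g y) → E x y) (h : NontrivIndep E A B) :
    NontrivIndep E' (f '' A) (g '' B) := by
  refine ⟨h.1.image f, h.2.1.image g, ?_⟩
  rintro _ ⟨a, ha, rfl⟩ _ ⟨b, hb, rfl⟩ hab
  exact h.2.2 a ha b hb (hfg a b hab)

lemma NontrivIndep.union_inter (h : NontrivIndep E A B) (h' : NontrivIndep E S T)
    (hBT : (B ∩ T).Nonempty) : NontrivIndep E (A ∪ S) (B ∩ T) := by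
  refine ⟨h.1.mono subset_union_left, hBT, ?_⟩
  rintro a (ha | ha) b ⟨hb, hb'⟩
  · exact h.2.2 a ha b hb
  · exact h'.2.2 a ha b hb'

lemma NontrivIndep.inter_union (h : NontrivIndep E A B) (h' : NontrivIndep E S T)
    (hAS : (A ∩ S).Nonempty) : NontrivIndep E (A ∩ S) (B ∪ T) := by
  refine ⟨hAS, h.2.1.mono subset_union_left, ?_⟩
  rintro a ⟨ha, ha'⟩ b (hb | hb)
  · exact h.2.2 a ha b hb
  · exact h'.2.2 a ha' b hb

namespace IsMaxIndep

lemma ncard_compl_nbrX_le (h : IsMaxIndep E A B) : ((nbrX E A)ᶜ).ncard ≤ B.ncard := by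
  have := h.2 _ _ h.1.compl_nbrX
  omega

lemma image {σ : X → X} {τ : Y → Y} (hσ : Injective σ) (hτ : Injective τ)
    (hστ : ∀ x y, E (σ x) (τ y) → E x y) (h : IsMaxIndep E A B) :
    IsMaxIndep E (σ '' A) (τ '' B) := by
  refine ⟨h.1.image hστ, ?_⟩
  rw [ncard_image_of_injective A hσ, ncard_image_of_injective B hτ]
  exact h.2

variable [Finite X] [Finite Y]

lemma inter_nonempty (h : IsMaxIndep E A B) (h' : IsMaxIndep E S T) (hAT : A.ncard ≤ T.ncard)
    (hAS : (A ∩ S).Nonempty) : (B ∩ T).Nonempty := by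
  have hle := h.2 _ _ (h.1.inter_union h'.1 hAS)
  have hB := ncard_union_add_ncard_inter B T (toFinite B) (toFinite T)
  have hpos := (ncard_pos (toFinite (A ∩ S))).mpr hAS
  exact nonempty_of_ncard_ne_zero (by omega)

lemma union_inter_and_inter_union (h : IsMaxIndep E A B) (h' : IsMaxIndep E S T)
    (hAS : (A ∩ S).Nonempty) (hBT : (B ∩ T).Nonempty) :
    IsMaxIndep E (A ∪ S) (B ∩ T) ∧ IsMaxIndep E (A ∩ S) (B ∪ T) := by
  have hU := h.1.union_inter h'.1 hBT
  have hI := h.1.inter_union h'.1 hAS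
  have hUle := h.2 _ _ hU
  have hIle := h.2 _ _ hI
  have hSle := h.2 _ _ h'.1
  have hTle := h'.2 _ _ h.1
  have hA := ncard_union_add_ncard_inter A S (toFinite A) (toFinite S)
  have hB := ncard_union_add_ncard_inter B T (toFinite B) (toFinite T)
  exact ⟨⟨hU, fun A' B' hAB' => (h.2 A' B' hAB').trans (by omega)⟩,
    ⟨hI, fun A' B' hAB' => (h.2 A' B' hAB').trans (by omega)⟩⟩

end IsMaxIndep

end

theorem stmt6_general {X Y : Type*} [Fintype X] [Fintype Y] (E : X → Y → Prop)
    -- `(σ, τ)` is an automorphism of the bipartite graph stabilizing `X`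
    (σ : X ≃ X) (τ : Y ≃ Y) (hστ : ∀ x y, E (σ x) (τ y) ↔ E x y)
    (A : Set X) (hA : FragX E A)
    (hmeet : (σ '' A ∩ A).Nonempty)
    -- `|A| ≤ |φ(A)|` where `φ(A) = Y \ N(A)`
    (hle : A.ncard ≤ ((nbrX E A)ᶜ).ncard) :
    FragX E (A ∪ σ '' A) ∧ FragX E (A ∩ σ '' A) := by
  obtain ⟨B, hAB⟩ : ∃ B, IsMaxIndep E A B := hA
  have hST := hAB.image σ.injective τ.injective fun x y => (hστ x y).1
  have hAT : A.ncard ≤ (τ '' B).ncard := by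
    rw [ncard_image_of_injective B τ.injective]
    exact hle.trans hAB.ncard_compl_nbrX_le
  have hAS : (A ∩ σ '' A).Nonempty := inter_comm (σ '' A) A ▸ hmeet
  have hBT := hAB.inter_nonempty hST hAT hAS
  obtain ⟨hU, hI⟩ := hAB.union_inter_and_inter_union hST hAS hBT
  exact ⟨⟨_, hU⟩, ⟨_, hI⟩⟩

theorem stmt6 {X Y : Type*} [Fintype X] [Fintype Y] (E : X → Y → Prop)
    (hnc : ∃ x y, ¬ E x y)
    -- `(σ, τ)` is an automorphism of the bipartite graph stabilizing `X`
    (σ : X ≃ X) (τ : Y ≃ Y) (hστ : ∀ x y, E (σ x) (τ y) ↔ E x y)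
    (A : Set X) (hA : FragX E A)
    (hmeet : (σ '' A ∩ A).Nonempty)
    -- `|A| ≤ |φ(A)|` where `φ(A) = Y \ N(A)`
    (hle : A.ncard ≤ ((nbrX E A)ᶜ).ncard) :
    FragX E (A ∪ σ '' A) ∧ FragX E (A ∩ σ '' A) :=
  stmt6_general E σ τ hστ A hA hmeet hle
end
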